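/- Let P₁ := e₁₃+e₂₄, Q₁ := −e₁₄−e₂₃+2e₅₇, Q₂ := −e₁₃+e₂₄+2e₆₇, Q₃ := e₁₂+e₃₄−2e₅₆, and for p, q, r ∈ ℝ define the linear operator R on Λ²(ℝ⁷) by R := p(e₃₄⊗Q₃ − e₁₄⊗Q₁ − e₂₃⊗Q₁ − e₁₃⊗Q₂ + e₂₄⊗Q₂ + e₁₂⊗Q₃) + q(e₅₆⊗Q₃ − e₅₇⊗Q₁ − e₆₇⊗Q₂) + r(e₁₃ + e₂₄)⊗P₁. Then R is symmetric (self-adjoint with respect to ⟨·,·⟩) if and only if q = −2p, and in that case R = p(Q₁⊗Q₁ + Q₂⊗Q₂ + Q₃⊗Q₃) + r·P₁⊗P₁. -/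

import Mathlib

/-!
Pairing against e₃₄ and e₅₆ gives ⟨R e₃₄, e₅₆⟩ = −2p, coming from the coefficient −2 of e₅₆
in Q₃, whereas ⟨e₃₄, R e₅₆⟩ = q; so symmetry forces q = −2p. Conversely, when q = −2p the
rank-one terms regroup, by linearity of α ↦ α ⊗ β, into Σ Qₖ ⊗ Qₖ + r P₁ ⊗ P₁, and every
operator α ⊗ α is symmetric because ⟨(α ⊗ α) γ, δ⟩ = ⟨α, γ⟩⟨α, δ⟩.
-/

open Matrix BigOperators

noncomputable section

abbrev M8 : Type := Matrix (Fin 8) (Fin 8) ℝ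

/-- 2-forms on ℝ⁷ -/
abbrev Lam2 : Type := AlternatingMap ℝ (Fin 7 → ℝ) ℝ (Fin 2)

/-- 3-forms on ℝ⁷ -/
abbrev Lam3 : Type := AlternatingMap ℝ (Fin 7 → ℝ) ℝ (Fin 3)

/-- standard basis of ℝ⁷ -/
def u (i : Fin 7) : Fin 7 → ℝ := Pi.single i 1

/-- standard spinor basis ψ₁,…,ψ₈ (0-indexed) -/
def ψ (k : Fin 8) : Fin 8 → ℝ := Pi.single k 1

/-- E_{ij} : ψ_i ↦ ψ_j, ψ_j ↦ -ψ_i -/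
def EE (i j : Fin 8) : M8 := Matrix.single j i 1 - Matrix.single i j 1

/-- Clifford multiplication by e₁,…,e₇ (0-indexed) -/
def e : Fin 7 → M8 :=
  ![EE 0 7 + EE 1 6 - EE 2 5 - EE 3 4,
    -EE 0 6 + EE 1 7 + EE 2 4 - EE 3 5,
    -EE 0 5 + EE 1 4 - EE 2 7 + EE 3 6,
    -EE 0 4 - EE 1 5 - EE 2 6 - EE 3 7,
    -EE 0 2 - EE 1 3 + EE 4 6 + EE 5 7,
    EE 0 3 - EE 1 2 - EE 4 7 + EE 5 6,
    EE 0 1 - EE 2 3 - EE 4 5 + EE 6 7]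

def pick2 (i j : Fin 7) : (Fin 7 → ℝ) →ₗ[ℝ] (Fin 2 → ℝ) :=
  LinearMap.pi fun m => LinearMap.proj (![i, j] m)

def pick3 (i j k : Fin 7) : (Fin 7 → ℝ) →ₗ[ℝ] (Fin 3 → ℝ) :=
  LinearMap.pi fun m => LinearMap.proj (![i, j, k] m)

/-- the 2-form e_i ∧ e_j -/
def w2 (i j : Fin 7) : Lam2 :=
  (Matrix.detRowAlternating : AlternatingMap ℝ (Fin 2 → ℝ) ℝ (Fin 2)).compLinearMap (pick2 i j)

/-- the 3-form e_i ∧ e_j ∧ e_k -/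
def w3 (i j k : Fin 7) : Lam3 :=
  (Matrix.detRowAlternating : AlternatingMap ℝ (Fin 3 → ℝ) ℝ (Fin 3)).compLinearMap (pick3 i j k)

/-- Clifford action of a 2-form -/
def σ2 (ω : Lam2) : M8 :=
  ∑ i : Fin 7, ∑ j : Fin 7, if i < j then ω ![u i, u j] • (e i * e j) else 0

/-- Clifford action of a 3-form -/
def σ3 (T : Lam3) : M8 :=
  ∑ i : Fin 7, ∑ j : Fin 7, ∑ k : Fin 7,
    if i < j ∧ j < k then T ![u i, u j, u k] • (e i * e j * e k) else 0

/-- the skew-symmetric 7×7 matrix A_ω associated to a 2-form ω -/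
def A2 (ω : Lam2) : Matrix (Fin 7) (Fin 7) ℝ :=
  ∑ i : Fin 7, ∑ j : Fin 7,
    if i < j then ω ![u i, u j] •
      (Matrix.single j i (1 : ℝ) - Matrix.single i j 1) else 0

/-- T is ω-invariant: the natural action of the 2-form ω on the 3-form T vanishes -/
def inv3 (ω : Lam2) (T : Lam3) : Prop :=
  ∀ X Y Z : Fin 7 → ℝ,
    T ![A2 ω *ᵥ X, Y, Z] + T ![X, A2 ω *ᵥ Y, Z] + T ![X, Y, A2 ω *ᵥ Z] = 0

/-- the standard G₂ 3-form φ = e₁₂₇+e₁₃₅−e₁₄₆−e₂₃₆−e₂₄₅+e₃₄₇+e₅₆₇ -/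
def φf : Lam3 :=
  w3 0 1 6 + w3 0 2 4 - w3 0 3 5 - w3 1 2 5 - w3 1 3 4 + w3 2 3 6 + w3 4 5 6

/-- the inner product on Λ²(ℝ⁷) making {e_i∧e_j}_{i<j} orthonormal -/
def ip2 (α β : Lam2) : ℝ :=
  ∑ i : Fin 7, ∑ j : Fin 7, if i < j then α ![u i, u j] * β ![u i, u j] else 0

/-- α⊗β : γ ↦ ⟨α,γ⟩β -/
def tensor2 (α β : Lam2) : Lam2 → Lam2 := fun γ => ip2 α γ • β

def P1f : Lam2 := w2 0 2 + w2 1 3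
def Q1f : Lam2 := -w2 0 3 - w2 1 2 + (2:ℝ) • w2 4 6
def Q2f : Lam2 := -w2 0 2 + w2 1 3 + (2:ℝ) • w2 5 6
def Q3f : Lam2 := w2 0 1 + w2 2 3 - (2:ℝ) • w2 4 5

/-- R := p(e₃₄⊗Q₃ − e₁₄⊗Q₁ − e₂₃⊗Q₁ − e₁₃⊗Q₂ + e₂₄⊗Q₂ + e₁₂⊗Q₃)
      + q(e₅₆⊗Q₃ − e₅₇⊗Q₁ − e₆₇⊗Q₂) + r(e₁₃+e₂₄)⊗P₁ -/
def Rop (p q r : ℝ) : Lam2 → Lam2 := fun γ =>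
  p • (tensor2 (w2 2 3) Q3f γ - tensor2 (w2 0 3) Q1f γ - tensor2 (w2 1 2) Q1f γ
      - tensor2 (w2 0 2) Q2f γ + tensor2 (w2 1 3) Q2f γ + tensor2 (w2 0 1) Q3f γ)
  + q • (tensor2 (w2 4 5) Q3f γ - tensor2 (w2 4 6) Q1f γ - tensor2 (w2 5 6) Q2f γ)
  + r • tensor2 (w2 0 2 + w2 1 3) P1f γ

lemma w2_apply (i j : Fin 7) (X Y : Fin 7 → ℝ) : w2 i j ![X, Y] = X i * Y j - X j * Y i := by
  change Matrix.det (Matrix.of fun r m => (![X, Y] r) (![i, j] m)) = _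
  simp [Matrix.det_fin_two]

lemma ip2_comm (α β : Lam2) : ip2 α β = ip2 β α := by
  simp_rw [ip2, mul_comm (α _)]

lemma ip2_add_left (α β γ : Lam2) : ip2 (α + β) γ = ip2 α γ + ip2 β γ := by
  simp only [ip2, AlternatingMap.add_apply, add_mul, ← Finset.sum_add_distrib, ite_add_ite,
    add_zero]

lemma ip2_smul_left (c : ℝ) (α γ : Lam2) : ip2 (c • α) γ = c * ip2 α γ := by
  simp only [ip2, Finset.mul_sum, AlternatingMap.smul_apply, smul_eq_mul, mul_ite, mul_zero,
    mul_assoc]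

lemma ip2_neg_left (α γ : Lam2) : ip2 (-α) γ = -ip2 α γ := by
  rw [← neg_one_smul ℝ α, ip2_smul_left, neg_one_mul]

lemma ip2_sub_left (α β γ : Lam2) : ip2 (α - β) γ = ip2 α γ - ip2 β γ := by
  rw [sub_eq_add_neg, ip2_add_left, ip2_neg_left, sub_eq_add_neg]

lemma ip2_tensor2_left (α β γ δ : Lam2) : ip2 (tensor2 α β γ) δ = ip2 α γ * ip2 β δ :=
  ip2_smul_left _ _ _

lemma ip2_w2_left {i j : Fin 7} (hij : i < j) (γ : Lam2) : ip2 (w2 i j) γ = γ ![u i, u j] := by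
  have summand (k l : Fin 7) : (if k < l then w2 i j ![u k, u l] * γ ![u k, u l] else 0) =
      if k = i then if l = j then γ ![u i, u j] else 0 else 0 := by
    -- the other nonzero evaluation, at (k, l) = (j, i), is cut off by `k < l`
    simp only [w2_apply, u, Pi.single_apply]
    split_ifs <;> subst_vars <;> first | (exfalso; omega) | simp
  simp [ip2, summand]

lemma Rop_neg_two_mul (p r : ℝ) :
    Rop p (-2 * p) r = fun γ =>
      p • (tensor2 Q1f Q1f γ + tensor2 Q2f Q2f γ + tensor2 Q3f Q3f γ) + r • tensor2 P1f P1f γ := by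
  funext γ
  simp only [Rop, tensor2, P1f, Q1f, Q2f, Q3f, ip2_add_left, ip2_sub_left, ip2_neg_left,
    ip2_smul_left]
  module

lemma ip2_Rop_w2_23_w2_45 (p q r : ℝ) : ip2 (Rop p q r (w2 2 3)) (w2 4 5) = -2 * p := by
  rw [ip2_comm, ip2_w2_left (by decide)]
  simp [Rop, tensor2, P1f, Q1f, Q2f, Q3f, ip2_add_left, ip2_w2_left, w2_apply, u]
  ring

lemma ip2_w2_23_Rop_w2_45 (p q r : ℝ) : ip2 (w2 2 3) (Rop p q r (w2 4 5)) = q := by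
  rw [ip2_w2_left (by decide)]
  simp [Rop, tensor2, P1f, Q1f, Q2f, Q3f, ip2_add_left, ip2_w2_left, w2_apply, u]

/-- R is symmetric iff q = −2p, in which case
R = p(Q₁⊗Q₁ + Q₂⊗Q₂ + Q₃⊗Q₃) + r·P₁⊗P₁. -/
theorem stmt_15 (p q r : ℝ) :
    ((∀ γ δ : Lam2, ip2 (Rop p q r γ) δ = ip2 γ (Rop p q r δ)) ↔ q = -2 * p) ∧
    (q = -2 * p →
      Rop p q r = fun γ =>
        p • (tensor2 Q1f Q1f γ + tensor2 Q2f Q2f γ + tensor2 Q3f Q3f γ)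
          + r • tensor2 P1f P1f γ) := by
  refine ⟨⟨fun hsymm => ?_, ?_⟩, ?_⟩
  · rw [← ip2_w2_23_Rop_w2_45 p q r, ← hsymm, ip2_Rop_w2_23_w2_45]
  · rintro rfl γ δ
    rw [Rop_neg_two_mul, ip2_comm γ]
    simp only [ip2_add_left, ip2_smul_left, ip2_tensor2_left]
    ring
  · rintro rfl
    exact Rop_neg_two_mul p r
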